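/- Let A and B be lattices. Then: (i) BoxCl(a ⊠ b) = a ⊠ b, for all a ∈ A and b ∈ B; (ii) if H ⊆ A × B is confined, then BoxCl(H) is confined; (iii) K ∈ A ⊠ B if and only if K = BoxCl(H) for some confined H ∈ A ⊡ B; (iv) if A and B have least elements and a_0 ≤ a_1 in A, b_0 ≤ b_1 in B, then BoxCl((a_0 ⊠ b_1) ∪ (a_1 ⊠ b_0)) = (a_0 ⊠ b_1) ∪ (a_1 ⊠ b_0), so (a_0 ⊠ b_1) ∪ (a_1 ⊠ b_0) ∈ A ⊠ B. -/

import Mathlib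

/-- The pure box `a □ b = {⟨x,y⟩ : x ≤ a or y ≤ b}`. -/
def pureBox {A B : Type*} [Lattice A] [Lattice B] (a : A) (b : B) : Set (A × B) :=
  {p : A × B | p.1 ≤ a ∨ p.2 ≤ b}

/-- `a ∘ b = {⟨x,y⟩ : x ≤ a and y ≤ b}`. -/
def pureCirc {A B : Type*} [Lattice A] [Lattice B] (a : A) (b : B) : Set (A × B) :=
  {p : A × B | p.1 ≤ a ∧ p.2 ≤ b}

/-- The box product `A □ B`: all finite (nonempty) intersections of pure boxes. -/
def BoxProd (A B : Type*) [Lattice A] [Lattice B] : Set (Set (A × B)) :=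
  {H | ∃ (n : ℕ) (a : Fin (n + 1) → A) (b : Fin (n + 1) → B),
    H = ⋂ i, pureBox (a i) (b i)}

/-- `A ⊡ B`: all finite unions of pure boxes (at least one) and pure circles. -/
def BoxDot (A B : Type*) [Lattice A] [Lattice B] : Set (Set (A × B)) :=
  {H | ∃ (m n : ℕ) (a : Fin (m + 1) → A) (b : Fin (m + 1) → B)
      (c : Fin n → A) (d : Fin n → B),
    H = (⋃ i, pureBox (a i) (b i)) ∪ ⋃ j, pureCirc (c j) (d j)}

/-- The box closure of a subset of `A × B`: intersection of all pure boxes containing it. -/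
def BoxCl {A B : Type*} [Lattice A] [Lattice B] (X : Set (A × B)) : Set (A × B) :=
  ⋂ (a : A) (b : B) (_ : X ⊆ pureBox a b), pureBox a b

/-- The pure lattice tensor `a ⊠ b = (a ∘ b) ∪ ⊥_{A,B}`, where `⊥_{A,B}` consists of
the pairs one of whose coordinates is a least element. -/
def pureTens {A B : Type*} [Lattice A] [Lattice B] (a : A) (b : B) : Set (A × B) :=
  pureCirc a b ∪ {p : A × B | IsBot p.1 ∨ IsBot p.2}

/-- A subset of `A × B` is confined if it is contained in some pure lattice tensor. -/
def Confined {A B : Type*} [Lattice A] [Lattice B] (X : Set (A × B)) : Prop :=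
  ∃ (a : A) (b : B), X ⊆ pureTens a b

/-- The lattice tensor product `A ⊠ B`: all confined elements of `A □ B`. -/
def LatTens (A B : Type*) [Lattice A] [Lattice B] : Set (Set (A × B)) :=
  {H | H ∈ BoxProd A B ∧ Confined H}

/-- `X^△ = {⟨a,b⟩ : ⟨x,y⟩ ◁ ⟨a,b⟩ for all ⟨x,y⟩ ∈ X}` where `⟨x,y⟩ ◁ ⟨a,b⟩` iff
`x ≤ a` or `y ≤ b`. -/
def trUp {A B : Type*} [Lattice A] [Lattice B] (X : Set (A × B)) : Set (A × B) :=
  {p : A × B | ∀ q ∈ X, q.1 ≤ p.1 ∨ q.2 ≤ p.2}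

/-- `X^▽ = {⟨a,b⟩ : ⟨a,b⟩ ◁ ⟨x,y⟩ for all ⟨x,y⟩ ∈ X}`. -/
def trDown {A B : Type*} [Lattice A] [Lattice B] (X : Set (A × B)) : Set (A × B) :=
  {p : A × B | ∀ q ∈ X, p.1 ≤ q.1 ∨ p.2 ≤ q.2}

/-!
Off the bottom `⊥_{A,B}`, a point lies in `a ⊠ b` as soon as it lies in all boxes `a □ z` and
`z □ b`, and these boxes contain `a ⊠ b`; this gives (i), (ii) and (iv). For (iii), a finite
intersection of boxes distributes into one box and finitely many circles. Conversely, a box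
`w □ z` contains `⋃ (aᵢ □ bᵢ) ∪ ⋃ (cⱼ ∘ dⱼ)` exactly when it is everything or when, for a choice
`S` of the circles bounded in the first coordinate, `w` bounds the `aᵢ` and the `cⱼ` with
`j ∈ S` and `z` bounds the `bᵢ` and the `dⱼ` with `j ∉ S`; so the box closure is the
intersection of the finitely many boxes `uₛ □ vₛ` built from the corresponding joins.
-/

theorem Set.Finite.exists_isLUB {α : Type*} [Lattice α] {s : Set α} (hs : s.Finite)
    (hne : s.Nonempty) : ∃ a, IsLUB s a :=
  ⟨hs.toFinset.sup' (hs.toFinset_nonempty.2 hne) id, by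
    simpa using Finset.isLUB_sup' (hs.toFinset_nonempty.2 hne)⟩

section BoxClosure

variable {A B : Type*} [Lattice A] [Lattice B]

theorem mem_pureBox {a : A} {b : B} {p : A × B} : p ∈ pureBox a b ↔ p.1 ≤ a ∨ p.2 ≤ b :=
  Iff.rfl

theorem mem_pureCirc {a : A} {b : B} {p : A × B} : p ∈ pureCirc a b ↔ p.1 ≤ a ∧ p.2 ≤ b :=
  Iff.rfl

theorem mem_pureTens {a : A} {b : B} {p : A × B} :
    p ∈ pureTens a b ↔ (p.1 ≤ a ∧ p.2 ≤ b) ∨ IsBot p.1 ∨ IsBot p.2 :=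
  Iff.rfl

theorem mem_boxCl {X : Set (A × B)} {p : A × B} :
    p ∈ BoxCl X ↔ ∀ (a : A) (b : B), X ⊆ pureBox a b → p ∈ pureBox a b := by
  simp [BoxCl]

theorem subset_boxCl (X : Set (A × B)) : X ⊆ BoxCl X :=
  fun _ hp => mem_boxCl.2 fun _ _ hX => hX hp

theorem boxCl_subset_pureBox {X : Set (A × B)} {a : A} {b : B} (h : X ⊆ pureBox a b) :
    BoxCl X ⊆ pureBox a b :=
  fun _ hp => mem_boxCl.1 hp a b h

theorem boxCl_mono {X Y : Set (A × B)} (h : X ⊆ Y) : BoxCl X ⊆ BoxCl Y :=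
  fun _ hp => mem_boxCl.2 fun _ _ hY => mem_boxCl.1 hp _ _ (h.trans hY)

theorem boxCl_iInter_pureBox {ι : Sort*} (a : ι → A) (b : ι → B) :
    BoxCl (⋂ i, pureBox (a i) (b i)) = ⋂ i, pureBox (a i) (b i) :=
  (Set.subset_iInter fun i => boxCl_subset_pureBox (Set.iInter_subset _ i)).antisymm
    (subset_boxCl _)

theorem boxCl_eq_iInter_of_cofinal {ι : Sort*} {X : Set (A × B)} (u : ι → A) (v : ι → B)
    (hX : ∀ i, X ⊆ pureBox (u i) (v i))
    (hcofinal : ∀ w z, X ⊆ pureBox w z → ∃ i, pureBox (u i) (v i) ⊆ pureBox w z) :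
    BoxCl X = ⋂ i, pureBox (u i) (v i) := by
  refine (Set.subset_iInter fun i => boxCl_subset_pureBox (hX i)).antisymm fun p hp => ?_
  refine mem_boxCl.2 fun w z hwz => ?_
  obtain ⟨i, hi⟩ := hcofinal w z hwz
  exact hi (Set.mem_iInter.1 hp i)

theorem pureBox_subset_pureBox_iff {a w : A} {b z : B} :
    pureBox a b ⊆ pureBox w z ↔ IsTop w ∨ IsTop z ∨ (a ≤ w ∧ b ≤ z) := by
  constructor
  · intro h
    by_cases hw : IsTop w
    · exact Or.inl hw
    by_cases hz : IsTop z
    · exact Or.inr (Or.inl hz)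
    obtain ⟨x, hx⟩ := not_forall.1 hw
    obtain ⟨y, hy⟩ := not_forall.1 hz
    exact Or.inr (Or.inr ⟨(h (Or.inl le_rfl : (a, y) ∈ pureBox a b)).resolve_right hy,
      (h (Or.inr le_rfl : (x, b) ∈ pureBox a b)).resolve_left hx⟩)
  · rintro (hw | hz | ⟨ha, hb⟩) p hp
    · exact Or.inl (hw _)
    · exact Or.inr (hz _)
    · exact hp.imp (·.trans ha) (·.trans hb)

theorem pureCirc_subset_pureBox_iff {c w : A} {d z : B} :
    pureCirc c d ⊆ pureBox w z ↔ c ≤ w ∨ d ≤ z :=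
  ⟨fun h => h (show (c, d) ∈ pureCirc c d from ⟨le_rfl, le_rfl⟩),
    fun h _ hp => h.imp hp.1.trans hp.2.trans⟩

end BoxClosure

section Membership

variable {A B : Type*} [Lattice A] [Lattice B]

theorem iInter_pureBox_mem_boxProd {ι : Type*} [Fintype ι] [Nonempty ι] (a : ι → A)
    (b : ι → B) : ⋂ i, pureBox (a i) (b i) ∈ BoxProd A B := by
  obtain ⟨n, hn⟩ := Nat.exists_eq_succ_of_ne_zero (Fintype.card_ne_zero (α := ι))
  let e := (Fintype.equivFinOfCardEq hn).symm
  exact ⟨n, a ∘ e, b ∘ e, (e.surjective.iInter_comp fun i => pureBox (a i) (b i)).symm⟩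

theorem pureBox_union_iUnion_pureCirc_mem_boxDot {κ : Type*} [Fintype κ] (a : A) (b : B)
    (c : κ → A) (d : κ → B) : pureBox a b ∪ ⋃ k, pureCirc (c k) (d k) ∈ BoxDot A B := by
  let e := (Fintype.equivFin κ).symm
  refine ⟨0, Fintype.card κ, fun _ => a, fun _ => b, c ∘ e, d ∘ e, ?_⟩
  rw [Set.iUnion_const, Function.comp_def, Function.comp_def,
    e.surjective.iUnion_comp fun k => pureCirc (c k) (d k)]

theorem iInter_pureBox_eq_union_iUnion_pureCirc {ι : Type*} [Fintype ι] [DecidableEq ι]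
    [Nonempty ι] (a : ι → A) (b : ι → B) :
    ⋂ i, pureBox (a i) (b i) =
      pureBox (Finset.univ.inf' Finset.univ_nonempty a) (Finset.univ.inf' Finset.univ_nonempty b)
        ∪ ⋃ S : {S : Finset ι // S.Nonempty ∧ Sᶜ.Nonempty},
          pureCirc (S.1.inf' S.2.1 a) (S.1ᶜ.inf' S.2.2 b) := by
  classical
  ext p
  simp only [Set.mem_iInter, Set.mem_union, Set.mem_iUnion, mem_pureBox, mem_pureCirc,
    Finset.le_inf'_iff, Finset.mem_univ, forall_const]
  constructor
  · intro hp
    by_cases h₁ : ∀ i, p.1 ≤ a i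
    · exact Or.inl (Or.inl h₁)
    by_cases h₂ : ∀ i, p.2 ≤ b i
    · exact Or.inl (Or.inr h₂)
    obtain ⟨i₁, hi₁⟩ := not_forall.1 h₁
    obtain ⟨i₂, hi₂⟩ := not_forall.1 h₂
    let S := Finset.univ.filter fun i => p.1 ≤ a i
    refine Or.inr ⟨⟨S, ⟨i₂, ?_⟩, ⟨i₁, ?_⟩⟩, fun i hi => ?_, fun i hi => ?_⟩
    · simpa [S] using (hp i₂).resolve_right hi₂
    · simpa [S] using hi₁
    · simpa [S] using hi
    · exact (hp i).resolve_left (by simpa [S] using hi)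
  · rintro ((h | h) | ⟨S, h₁, h₂⟩) i
    · exact Or.inl (h i)
    · exact Or.inr (h i)
    · by_cases hi : i ∈ S.1
      · exact Or.inl (h₁ i hi)
      · exact Or.inr (h₂ i (Finset.mem_compl.2 hi))

end Membership

section Tensor

variable {A B : Type*} [Lattice A] [Lattice B]

theorem pureTens_mono {a₀ a₁ : A} {b₀ b₁ : B} (ha : a₀ ≤ a₁) (hb : b₀ ≤ b₁) :
    pureTens a₀ b₀ ⊆ pureTens a₁ b₁ :=
  Set.union_subset_union_left _ fun _ hp => ⟨hp.1.trans ha, hp.2.trans hb⟩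

theorem pureTens_subset_pureBox_left (a : A) (b : B) (z : B) : pureTens a b ⊆ pureBox a z := by
  rintro p (⟨h, -⟩ | h | h)
  · exact Or.inl h
  · exact Or.inl (h a)
  · exact Or.inr (h z)

theorem pureTens_subset_pureBox_right (a : A) (b : B) (w : A) : pureTens a b ⊆ pureBox w b := by
  rintro p (⟨-, h⟩ | h | h)
  · exact Or.inr h
  · exact Or.inl (h w)
  · exact Or.inr (h b)

theorem boxCl_pureTens (a : A) (b : B) : BoxCl (pureTens a b) = pureTens a b := by
  refine Set.Subset.antisymm (fun p hp => ?_) (subset_boxCl _)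
  rw [mem_pureTens, or_iff_not_imp_right, not_or]
  rintro ⟨h₁, h₂⟩
  obtain ⟨x, hx⟩ := not_forall.1 h₁
  obtain ⟨y, hy⟩ := not_forall.1 h₂
  exact ⟨(boxCl_subset_pureBox (pureTens_subset_pureBox_left a b y) hp).resolve_right hy,
    (boxCl_subset_pureBox (pureTens_subset_pureBox_right a b x) hp).resolve_left hx⟩

theorem Confined.boxCl {H : Set (A × B)} (h : Confined H) : Confined (BoxCl H) := by
  obtain ⟨a, b, hH⟩ := h
  exact ⟨a, b, (boxCl_mono hH).trans (boxCl_pureTens a b).subset⟩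

theorem pureTens_union_pureTens_subset {a₀ a₁ : A} {b₀ b₁ : B} (ha : a₀ ≤ a₁) (hb : b₀ ≤ b₁) :
    pureTens a₀ b₁ ∪ pureTens a₁ b₀ ⊆ pureTens a₁ b₁ :=
  Set.union_subset (pureTens_mono ha le_rfl) (pureTens_mono le_rfl hb)

theorem boxCl_pureTens_union_pureTens {a₀ a₁ : A} {b₀ b₁ : B} (ha : a₀ ≤ a₁) (hb : b₀ ≤ b₁) :
    BoxCl (pureTens a₀ b₁ ∪ pureTens a₁ b₀) = pureTens a₀ b₁ ∪ pureTens a₁ b₀ := by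
  refine Set.Subset.antisymm (fun p hp => ?_) (subset_boxCl _)
  have hbox : p ∈ pureBox a₀ b₀ := boxCl_subset_pureBox (Set.union_subset
    (pureTens_subset_pureBox_left a₀ b₁ b₀) (pureTens_subset_pureBox_right a₁ b₀ a₀)) hp
  have hconf := (boxCl_pureTens a₁ b₁).subset (boxCl_mono (pureTens_union_pureTens_subset ha hb) hp)
  rcases hconf with ⟨h₁, h₂⟩ | hbot
  · exact hbox.elim (fun h => Or.inl (Or.inl ⟨h, h₂⟩)) (fun h => Or.inr (Or.inl ⟨h₁, h⟩))
  · exact Or.inl (Or.inr hbot)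

theorem pureBox_eq_of_isBot {x : A} {y : B} (hx : IsBot x) (hy : IsBot y) :
    pureBox x y = {p : A × B | IsBot p.1 ∨ IsBot p.2} := by
  ext p
  exact or_congr ⟨fun h z => h.trans (hx z), fun h => h x⟩
    ⟨fun h z => h.trans (hy z), fun h => h y⟩

theorem pureTens_union_pureTens_mem_boxDot {x : A} {y : B} (hx : IsBot x) (hy : IsBot y)
    (a₀ a₁ : A) (b₀ b₁ : B) : pureTens a₀ b₁ ∪ pureTens a₁ b₀ ∈ BoxDot A B := by
  have : pureTens a₀ b₁ ∪ pureTens a₁ b₀ =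
      pureBox x y ∪ ⋃ k : Bool, pureCirc (cond k a₀ a₁) (cond k b₁ b₀) := by
    rw [pureBox_eq_of_isBot hx hy]
    ext p
    simp only [pureTens, Set.mem_union, Set.mem_iUnion, Bool.exists_bool, cond_true, cond_false]
    tauto
  rw [this]
  exact pureBox_union_iUnion_pureCirc_mem_boxDot _ _ _ _

end Tensor

section BoxClosureOfBoxDot

variable {A B : Type*} [Lattice A] [Lattice B]

theorem union_iUnion_subset_pureBox_iff {ι κ : Sort*} {a : ι → A} {b : ι → B} {c : κ → A}
    {d : κ → B} {w : A} {z : B} :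
    (⋃ i, pureBox (a i) (b i)) ∪ (⋃ k, pureCirc (c k) (d k)) ⊆ pureBox w z ↔
      (∀ i, IsTop w ∨ IsTop z ∨ (a i ≤ w ∧ b i ≤ z)) ∧ ∀ k, c k ≤ w ∨ d k ≤ z := by
  simp only [Set.union_subset_iff, Set.iUnion_subset_iff, pureBox_subset_pureBox_iff,
    pureCirc_subset_pureBox_iff]

theorem boxCl_mem_boxProd {H : Set (A × B)} (hH : H ∈ BoxDot A B) : BoxCl H ∈ BoxProd A B := by
  obtain ⟨m, n, a, b, c, d, rfl⟩ := hH
  choose u hu using fun S : Finset (Fin n) =>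
    ((Set.finite_range a).union (S.finite_toSet.image c)).exists_isLUB
      ⟨a 0, Or.inl (Set.mem_range_self 0)⟩
  choose v hv using fun S : Finset (Fin n) =>
    ((Set.finite_range b).union ((↑S : Set (Fin n))ᶜ.toFinite.image d)).exists_isLUB
      ⟨b 0, Or.inl (Set.mem_range_self 0)⟩
  rw [boxCl_eq_iInter_of_cofinal u v]
  · exact iInter_pureBox_mem_boxProd u v
  · refine fun S => union_iUnion_subset_pureBox_iff.2 ⟨fun i => ?_, fun j => ?_⟩
    · exact Or.inr (Or.inr ⟨(hu S).1 (Or.inl ⟨i, rfl⟩), (hv S).1 (Or.inl ⟨i, rfl⟩)⟩)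
    · by_cases hj : j ∈ S
      · exact Or.inl ((hu S).1 (Or.inr ⟨j, hj, rfl⟩))
      · exact Or.inr ((hv S).1 (Or.inr ⟨j, hj, rfl⟩))
  · intro w z hwz
    obtain ⟨hab, hcd⟩ := union_iUnion_subset_pureBox_iff.1 hwz
    by_cases htop : IsTop w ∨ IsTop z
    · exact ⟨∅, pureBox_subset_pureBox_iff.2 (htop.elim Or.inl (Or.inr ∘ Or.inl))⟩
    have hab' i : a i ≤ w ∧ b i ≤ z := ((hab i).resolve_left (htop ∘ Or.inl)).resolve_left
      (htop ∘ Or.inr)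
    classical
    refine ⟨Finset.univ.filter fun j => c j ≤ w, pureBox_subset_pureBox_iff.2
      (Or.inr (Or.inr ⟨(hu _).2 ?_, (hv _).2 ?_⟩))⟩
    · rintro _ (⟨i, rfl⟩ | ⟨j, hj, rfl⟩)
      · exact (hab' i).1
      · simpa using hj
    · rintro _ (⟨i, rfl⟩ | ⟨j, hj, rfl⟩)
      · exact (hab' i).2
      · exact (hcd j).resolve_left (by simpa using hj)

theorem mem_latTens_iff {K : Set (A × B)} :
    K ∈ LatTens A B ↔ ∃ H ∈ BoxDot A B, Confined H ∧ K = BoxCl H := by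
  constructor
  · rintro ⟨⟨n, a, b, rfl⟩, hK⟩
    refine ⟨_, ?_, hK, (boxCl_iInter_pureBox a b).symm⟩
    rw [iInter_pureBox_eq_union_iUnion_pureCirc]
    exact pureBox_union_iUnion_pureCirc_mem_boxDot _ _ _ _
  · rintro ⟨H, hH, hconf, rfl⟩
    exact ⟨boxCl_mem_boxProd hH, hconf.boxCl⟩

end BoxClosureOfBoxDot

/-- Basic properties of box closures in relation with the lattice tensor product. -/
theorem stmt_7 {A B : Type*} [Lattice A] [Lattice B] :
    (∀ (a : A) (b : B), BoxCl (pureTens a b) = pureTens a b) ∧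
    (∀ H : Set (A × B), Confined H → Confined (BoxCl H)) ∧
    (∀ K : Set (A × B), K ∈ LatTens A B ↔
      ∃ H ∈ BoxDot A B, Confined H ∧ K = BoxCl H) ∧
    (∀ (_ : ∃ x : A, IsBot x) (_ : ∃ y : B, IsBot y)
        (a₀ a₁ : A) (b₀ b₁ : B), a₀ ≤ a₁ → b₀ ≤ b₁ →
      BoxCl (pureTens a₀ b₁ ∪ pureTens a₁ b₀) = pureTens a₀ b₁ ∪ pureTens a₁ b₀ ∧
      pureTens a₀ b₁ ∪ pureTens a₁ b₀ ∈ LatTens A B) := by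
  refine ⟨boxCl_pureTens, fun _ => Confined.boxCl, fun _ => mem_latTens_iff, ?_⟩
  rintro ⟨x, hx⟩ ⟨y, hy⟩ a₀ a₁ b₀ b₁ ha hb
  have hcl := boxCl_pureTens_union_pureTens ha hb
  exact ⟨hcl, mem_latTens_iff.2 ⟨_, pureTens_union_pureTens_mem_boxDot hx hy a₀ a₁ b₀ b₁,
    ⟨a₁, b₁, pureTens_union_pureTens_subset ha hb⟩, hcl.symm⟩⟩
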